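/- arXiv:2510.01487 — 5 statements merged into one kernel-verified Lean document; each statement's English description precedes it below -/
import Mathlib

section
/- Let F : ℝⁿ → ℝ and G : ℝⁿ → ℝʳ be continuously differentiable. Let (x_k) ⊂ ℝⁿ, (μ_k) ⊂ ℝʳ with μ_k ≥ 0 componentwise, and (ρ_k) ⊂ (0, ∞) be sequences, and define the updated multipliers μ⁺_{k,i} = max{0, μ_{k,i} + ρ_k G_i(x_k)}. If x_k → x̄, μ⁺_k → μ̄, and ∇_x L_{ρ_k}(x_k, μ_k; ρ_k) → 0, then ∇F(x̄) + Σ_{i=1}^{r} μ̄_i ∇G_i(x̄) = 0, i.e., (x̄, μ̄) satisfies the stationarity condition of the Lagrangian F(x) + μᵀG(x). -/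
/-!
Differentiating the augmented Lagrangian term by term, the chain rule and `d/ds (max 0 s)² = 2 max 0 s`
show that `∇ₓ L_ρ(x, μ; ρ) = ∇F(x) + Σᵢ μ⁺ᵢ ∇Gᵢ(x)`, i.e. the gradient of the augmented Lagrangian is
the gradient of the ordinary Lagrangian evaluated at the updated multipliers. For `C¹` data the latter is
jointly continuous in `(x, μ)`, so its values along `(x_k, μ⁺_k)` converge both to `0` and to
`∇F(x̄) + Σᵢ μ̄ᵢ ∇Gᵢ(x̄)`.
-/

open Filter Topology InnerProductSpace
open scoped Gradient

lemma hasDerivAt_sq_max_zero (t : ℝ) :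
    HasDerivAt (fun s : ℝ => max 0 s ^ 2) (2 * max 0 t) t := by
  rcases lt_trichotomy t 0 with ht | rfl | ht
  · have hzero : (fun s : ℝ => max 0 s ^ 2) =ᶠ[𝓝 t] fun _ => 0 := by
      filter_upwards [Iio_mem_nhds ht] with s (hs : s < 0)
      simp [hs.le]
    simpa [ht.le] using (hasDerivAt_const t (0 : ℝ)).congr_of_eventuallyEq hzero
  · -- `(max 0 s)² ≤ s²` is `o(s)` at `0`
    rw [hasDerivAt_iff_isLittleO]
    have hbound : (fun s : ℝ => max 0 s ^ 2) =O[𝓝 0] fun s => s ^ 2 :=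
      Asymptotics.IsBigO.of_bound 1 <| Eventually.of_forall fun s => by
        rcases le_total s 0 with hs | hs <;> simp [hs, sq_nonneg]
    simpa using hbound.trans_isLittleO (Asymptotics.isLittleO_pow_id one_lt_two)
  · have hsq : (fun s : ℝ => max 0 s ^ 2) =ᶠ[𝓝 t] fun s => s ^ 2 := by
      filter_upwards [Ioi_mem_nhds ht] with s (hs : 0 < s)
      simp [hs.le]
    simpa [ht.le] using (hasDerivAt_pow 2 t).congr_of_eventuallyEq hsq

section AugmentedLagrangian

variable {E ι : Type*} [Fintype ι]

/-- The PHR augmented Lagrangian `L_ρ(·, μ; ρ)` of `min F` subject to `G ≤ 0`. -/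
noncomputable def phrAugmentedLagrangian (F : E → ℝ) (G : E → ι → ℝ) (μ : ι → ℝ) (ρ : ℝ)
    (y : E) : ℝ :=
  F y + (1 / (2 * ρ)) * ∑ i, (max 0 (μ i + ρ * G y i) ^ 2 - μ i ^ 2)

section Normed

variable [NormedAddCommGroup E] [NormedSpace ℝ E]

lemma HasFDerivAt.phrPenalty {g : E → ℝ} {g' : E →L[ℝ] ℝ} {y : E} (hg : HasFDerivAt g g' y)
    (m : ℝ) {ρ : ℝ} (hρ : ρ ≠ 0) :
    HasFDerivAt (fun z => 1 / (2 * ρ) * (max 0 (m + ρ * g z) ^ 2 - m ^ 2))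
      (max 0 (m + ρ * g y) • g') y := by
  have h := (((hasDerivAt_sq_max_zero _).comp_hasFDerivAt y
    ((hg.const_mul ρ).const_add m)).sub_const (m ^ 2)).const_mul (1 / (2 * ρ))
  refine h.congr_fderiv ?_
  rw [smul_smul, smul_smul]
  congr 1
  field_simp

lemma hasFDerivAt_phrAugmentedLagrangian {F : E → ℝ} {G : E → ι → ℝ} {F' : E →L[ℝ] ℝ}
    {G' : ι → E →L[ℝ] ℝ} {y : E} (hF : HasFDerivAt F F' y)
    (hG : ∀ i, HasFDerivAt (fun z => G z i) (G' i) y) (μ : ι → ℝ) {ρ : ℝ} (hρ : ρ ≠ 0) :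
    HasFDerivAt (phrAugmentedLagrangian F G μ ρ)
      (F' + ∑ i, max 0 (μ i + ρ * G y i) • G' i) y := by
  unfold phrAugmentedLagrangian
  simp_rw [Finset.mul_sum]
  exact hF.add (HasFDerivAt.fun_sum fun i _ => (hG i).phrPenalty (μ i) hρ)

end Normed

variable [NormedAddCommGroup E] [InnerProductSpace ℝ E] [CompleteSpace E]

lemma gradient_phrAugmentedLagrangian {F : E → ℝ} {G : E → ι → ℝ} {y : E}
    (hF : DifferentiableAt ℝ F y) (hG : ∀ i, DifferentiableAt ℝ (fun z => G z i) y)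
    (μ : ι → ℝ) {ρ : ℝ} (hρ : ρ ≠ 0) :
    ∇ (phrAugmentedLagrangian F G μ ρ) y =
      ∇ F y + ∑ i, max 0 (μ i + ρ * G y i) • ∇ (fun z => G z i) y := by
  have h := (hasFDerivAt_phrAugmentedLagrangian hF.hasFDerivAt
    (fun i => (hG i).hasFDerivAt) μ hρ).hasGradientAt
  simpa [map_add, map_sum, map_smul, gradient] using h.gradient

lemma ContDiff.continuous_gradient {f : E → ℝ} {n : WithTop ℕ∞} (hf : ContDiff ℝ n f)
    (hn : n ≠ 0) : Continuous (∇ f) :=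
  (toDual ℝ E).symm.continuous.comp (hf.continuous_fderiv hn)

lemma continuous_lagrangian_gradient {F : E → ℝ} {G : E → ι → ℝ} (hF : ContDiff ℝ 1 F)
    (hG : ∀ i, ContDiff ℝ 1 (fun z => G z i)) :
    Continuous fun p : E × (ι → ℝ) => ∇ F p.1 + ∑ i, p.2 i • ∇ (fun z => G z i) p.1 := by
  refine (hF.continuous_gradient one_ne_zero).comp continuous_fst |>.add ?_
  refine continuous_finsetSum _ fun i _ => ?_
  exact ((continuous_apply i).comp continuous_snd).smul
    (((hG i).continuous_gradient one_ne_zero).comp continuous_fst)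

end AugmentedLagrangian

theorem stmt_2_general {n r : ℕ} (F : EuclideanSpace ℝ (Fin n) → ℝ)
    (G : EuclideanSpace ℝ (Fin n) → Fin r → ℝ)
    (hF : ContDiff ℝ 1 F) (hG : ∀ i, ContDiff ℝ 1 (fun x => G x i))
    (x : ℕ → EuclideanSpace ℝ (Fin n)) (μ : ℕ → Fin r → ℝ) (ρ : ℕ → ℝ)
    (hρ : ∀ k, 0 < ρ k)
    (μplus : ℕ → Fin r → ℝ)
    (hμplus : ∀ k i, μplus k i = max 0 (μ k i + ρ k * G (x k) i))
    (L : ℕ → EuclideanSpace ℝ (Fin n) → ℝ)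
    (hL : ∀ k, L k = fun y => F y +
      (1 / (2 * ρ k)) * ∑ i, ((max 0 (μ k i + ρ k * G y i)) ^ 2 - (μ k i) ^ 2))
    (xbar : EuclideanSpace ℝ (Fin n)) (μbar : Fin r → ℝ)
    (hx : Filter.Tendsto x Filter.atTop (nhds xbar))
    (hμlim : Filter.Tendsto μplus Filter.atTop (nhds μbar))
    (hgrad : Filter.Tendsto (fun k => gradient (L k) (x k)) Filter.atTop (nhds 0)) :
    gradient F xbar + ∑ i, μbar i • gradient (fun y => G y i) xbar = 0 := by
  have hgradL : ∀ k, ∇ (L k) (x k) =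
      ∇ F (x k) + ∑ i, μplus k i • ∇ (fun y => G y i) (x k) := fun k => by
    simp_rw [hL k, hμplus k]
    exact gradient_phrAugmentedLagrangian (hF.differentiable one_ne_zero _)
      (fun i => (hG i).differentiable one_ne_zero _) (μ k) (hρ k).ne'
  have hlim := ((continuous_lagrangian_gradient hF hG).tendsto (xbar, μbar)).comp
    (hx.prodMk_nhds hμlim)
  exact tendsto_nhds_unique hlim (hgrad.congr hgradL)

/-- Stationarity step in the convergence proof of the augmented Lagrangian method:
if `x_k → x̄`, the updated multipliers `μ⁺_{k,i} = max {0, μ_{k,i} + ρ_k G_i(x_k)}`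
converge to `μ̄`, and the gradients of the PHR augmented Lagrangians at `x_k` tend
to `0`, then `∇F(x̄) + Σ_i μ̄_i ∇G_i(x̄) = 0`. -/
theorem stmt_2 {n r : ℕ} (F : EuclideanSpace ℝ (Fin n) → ℝ)
    (G : EuclideanSpace ℝ (Fin n) → Fin r → ℝ)
    (hF : ContDiff ℝ 1 F) (hG : ∀ i, ContDiff ℝ 1 (fun x => G x i))
    (x : ℕ → EuclideanSpace ℝ (Fin n)) (μ : ℕ → Fin r → ℝ) (ρ : ℕ → ℝ)
    (hμ : ∀ k i, 0 ≤ μ k i) (hρ : ∀ k, 0 < ρ k)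
    (μplus : ℕ → Fin r → ℝ)
    (hμplus : ∀ k i, μplus k i = max 0 (μ k i + ρ k * G (x k) i))
    (L : ℕ → EuclideanSpace ℝ (Fin n) → ℝ)
    (hL : ∀ k, L k = fun y => F y +
      (1 / (2 * ρ k)) * ∑ i, ((max 0 (μ k i + ρ k * G y i)) ^ 2 - (μ k i) ^ 2))
    (xbar : EuclideanSpace ℝ (Fin n)) (μbar : Fin r → ℝ)
    (hx : Filter.Tendsto x Filter.atTop (nhds xbar))
    (hμlim : Filter.Tendsto μplus Filter.atTop (nhds μbar))
    (hgrad : Filter.Tendsto (fun k => gradient (L k) (x k)) Filter.atTop (nhds 0)) :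
    gradient F xbar + ∑ i, μbar i • gradient (fun y => G y i) xbar = 0 :=
  stmt_2_general F G hF hG x μ ρ hρ μplus hμplus L hL xbar μbar hx hμlim hgrad
end

section
/- Let F : ℝⁿ → ℝ and G : ℝⁿ → ℝʳ be continuous. Let (x_k) ⊂ ℝⁿ with x_k → x̄, let (μ_k) ⊂ ℝʳ satisfy 0 ≤ μ_{k,i} ≤ M for all k and i and some constant M, and let ρ_k → ∞. If there exists an index j with G_j(x̄) > 0, then the PHR augmented Lagrangian values diverge: L_{ρ_k}(x_k, μ_k; ρ_k) → +∞ as k → ∞. -/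
/-- Divergence of the PHR augmented Lagrangian values at an infeasible limit point:
if `F, G` are continuous, `x_k → x̄`, the multipliers satisfy `0 ≤ μ_{k,i} ≤ M`,
`ρ_k → ∞`, and some constraint satisfies `G_j(x̄) > 0`, then
`L_{ρ_k}(x_k, μ_k; ρ_k) → +∞`. -/
theorem stmt_3 {n r : ℕ} (F : EuclideanSpace ℝ (Fin n) → ℝ)
    (G : EuclideanSpace ℝ (Fin n) → Fin r → ℝ)
    (hF : Continuous F) (hG : ∀ i, Continuous (fun x => G x i))
    (x : ℕ → EuclideanSpace ℝ (Fin n)) (μ : ℕ → Fin r → ℝ) (ρ : ℕ → ℝ)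
    (hρpos : ∀ k, 0 < ρ k) (M : ℝ) (hμ : ∀ k i, 0 ≤ μ k i ∧ μ k i ≤ M)
    (xbar : EuclideanSpace ℝ (Fin n))
    (hx : Filter.Tendsto x Filter.atTop (nhds xbar))
    (hρ : Filter.Tendsto ρ Filter.atTop Filter.atTop)
    (L : ℕ → EuclideanSpace ℝ (Fin n) → ℝ)
    (hL : ∀ k, L k = fun y => F y +
      (1 / (2 * ρ k)) * ∑ i, ((max 0 (μ k i + ρ k * G y i)) ^ 2 - (μ k i) ^ 2))
    (j : Fin r) (hj : 0 < G xbar j) :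
    Filter.Tendsto (fun k => L k (x k)) Filter.atTop Filter.atTop := by
  have hM0 : 0 ≤ M := le_trans (hμ 0 j).1 (hμ 0 j).2
  set c := G xbar j / 2 with hc
  have hc0 : 0 < c := by positivity
  have hGt : Filter.Tendsto (fun k => G (x k) j) Filter.atTop (nhds (G xbar j)) :=
    ((hG j).tendsto xbar).comp hx
  have hFt : Filter.Tendsto (fun k => F (x k)) Filter.atTop (nhds (F xbar)) :=
    (hF.tendsto xbar).comp hx
  have hev1 : ∀ᶠ k in Filter.atTop, c < G (x k) j :=
    hGt.eventually (eventually_gt_nhds (by simp only [hc]; linarith))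
  have hev2 : ∀ᶠ k in Filter.atTop, F xbar - 1 < F (x k) :=
    hFt.eventually (eventually_gt_nhds (by linarith))
  have hev3 : ∀ᶠ k in Filter.atTop, (1:ℝ) ≤ ρ k := hρ.eventually_ge_atTop 1
  have hg : Filter.Tendsto
      (fun k => (F xbar - 1 - r * M ^ 2 / 2) + ρ k * (c ^ 2 / 2))
      Filter.atTop Filter.atTop := by
    apply Filter.tendsto_atTop_add_const_left
    exact hρ.atTop_mul_const (by positivity)
  refine Filter.tendsto_atTop_mono' _ ?_ hg
  filter_upwards [hev1, hev2, hev3] with k h1 h2 h3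
  rw [hL k]
  simp only
  have hρk := hρpos k
  set S := ∑ i, ((max 0 (μ k i + ρ k * G (x k) i)) ^ 2 - (μ k i) ^ 2) with hS
  have hterm : ∀ i : Fin r,
      0 ≤ ((max 0 (μ k i + ρ k * G (x k) i)) ^ 2 - (μ k i) ^ 2) + M ^ 2 := by
    intro i
    have h := hμ k i
    nlinarith [sq_nonneg (max 0 (μ k i + ρ k * G (x k) i))]
  have hj' : (ρ k * c) ^ 2 - (μ k j) ^ 2 ≤
      (max 0 (μ k j + ρ k * G (x k) j)) ^ 2 - (μ k j) ^ 2 := by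
    have h := hμ k j
    have hmax : ρ k * c ≤ max 0 (μ k j + ρ k * G (x k) j) := by
      have hle : ρ k * c ≤ μ k j + ρ k * G (x k) j := by nlinarith
      exact le_trans hle (le_max_right _ _)
    have h0 : 0 ≤ ρ k * c := by positivity
    nlinarith
  have key : ((max 0 (μ k j + ρ k * G (x k) j)) ^ 2 - (μ k j) ^ 2) + M ^ 2 ≤
      ∑ i, (((max 0 (μ k i + ρ k * G (x k) i)) ^ 2 - (μ k i) ^ 2) + M ^ 2) :=
    Finset.single_le_sum (fun i _ => hterm i) (Finset.mem_univ j)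
  rw [Finset.sum_add_distrib, Finset.sum_const, Finset.card_univ,
    Fintype.card_fin, nsmul_eq_mul] at key
  have hμj2 : (μ k j) ^ 2 ≤ M ^ 2 := by
    have h := hμ k j
    nlinarith
  have hsum : (ρ k * c) ^ 2 - (r : ℝ) * M ^ 2 ≤ S := by
    rw [hS]; linarith
  have h4 : (1 / (2 * ρ k)) * ((ρ k * c) ^ 2 - (r : ℝ) * M ^ 2) ≤ (1 / (2 * ρ k)) * S :=
    mul_le_mul_of_nonneg_left hsum (by positivity)
  have h5 : (1 / (2 * ρ k)) * ((ρ k * c) ^ 2 - (r : ℝ) * M ^ 2)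
      = ρ k * (c ^ 2 / 2) - (r : ℝ) * M ^ 2 / (2 * ρ k) := by
    field_simp
  have h6 : (r : ℝ) * M ^ 2 / (2 * ρ k) ≤ (r : ℝ) * M ^ 2 / 2 := by
    have hMr : 0 ≤ (r : ℝ) * M ^ 2 := by positivity
    gcongr
    linarith
  rw [h5] at h4
  linarith
end

section
/- Let H ∈ ℝ^{m×m}, C ∈ ℝ^{m×n}, A ∈ ℝ^{p×m}, D ∈ ℝ^{p×n}, and let Λ ∈ ℝ^{p×p} be an invertible diagonal matrix. Suppose S ∈ ℝ^{m×n} and T ∈ ℝ^{p×n} solve the sensitivity system H S + Aᵀ T = −C and Λ A S = −Λ D, and suppose ν ∈ ℝᵐ and w ∈ ℝᵖ solve the adjoint system Hᵀ ν + Aᵀ Λ w = −v and A ν = 0 for a given vector v ∈ ℝᵐ. Then Sᵀ v = Cᵀ ν + Dᵀ Λ w. -/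
open Matrix

/-- Adjoint identity for the sensitivity system: if `(S, T)` solves
`H S + Aᵀ T = −C`, `Λ A S = −Λ D` with `Λ` an invertible diagonal matrix, and
`(ν, w)` solves the adjoint system `Hᵀ ν + Aᵀ Λ w = −v`, `A ν = 0`, then
`Sᵀ v = Cᵀ ν + Dᵀ Λ w`. -/
theorem stmt_6 {m n p : ℕ}
    (H : Matrix (Fin m) (Fin m) ℝ) (C : Matrix (Fin m) (Fin n) ℝ)
    (A : Matrix (Fin p) (Fin m) ℝ) (D : Matrix (Fin p) (Fin n) ℝ)
    (Λ : Matrix (Fin p) (Fin p) ℝ) (hΛdiag : Λ.IsDiag) (hΛunit : IsUnit Λ)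
    (S : Matrix (Fin m) (Fin n) ℝ) (T : Matrix (Fin p) (Fin n) ℝ)
    (hS : H * S + Aᵀ * T = -C) (hT : Λ * A * S = -(Λ * D))
    (v : Fin m → ℝ) (ν : Fin m → ℝ) (w : Fin p → ℝ)
    (hadj1 : Hᵀ *ᵥ ν + Aᵀ *ᵥ (Λ *ᵥ w) = -v) (hadj2 : A *ᵥ ν = 0) :
    Sᵀ *ᵥ v = Cᵀ *ᵥ ν + Dᵀ *ᵥ (Λ *ᵥ w) := by
  have hinv : Invertible Λ := hΛunit.invertible
  have hAS : A * S = -D := by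
    rw [Matrix.mul_assoc] at hT
    calc A * S = ⅟Λ * (Λ * (A * S)) := by rw [← Matrix.mul_assoc, invOf_mul_self, Matrix.one_mul]
      _ = ⅟Λ * -(Λ * D) := by rw [hT]
      _ = -D := by rw [Matrix.mul_neg, ← Matrix.mul_assoc, invOf_mul_self, Matrix.one_mul]
  have hv : v = -(Hᵀ *ᵥ ν + Aᵀ *ᵥ (Λ *ᵥ w)) := by
    rw [hadj1, neg_neg]
  have hHS : H * S = -C - Aᵀ * T := by
    rw [← hS]; abel
  calc Sᵀ *ᵥ v
      = -(Sᵀ *ᵥ (Hᵀ *ᵥ ν) + Sᵀ *ᵥ (Aᵀ *ᵥ (Λ *ᵥ w))) := by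
        rw [hv, mulVec_neg, mulVec_add]
    _ = -((H * S)ᵀ *ᵥ ν + (A * S)ᵀ *ᵥ (Λ *ᵥ w)) := by
        rw [transpose_mul, transpose_mul, mulVec_mulVec, mulVec_mulVec]
    _ = -((-C - Aᵀ * T)ᵀ *ᵥ ν + (-D)ᵀ *ᵥ (Λ *ᵥ w)) := by rw [hHS, hAS]
    _ = Cᵀ *ᵥ ν + Tᵀ *ᵥ (A *ᵥ ν) + Dᵀ *ᵥ (Λ *ᵥ w) := by
        simp [transpose_sub, transpose_neg, transpose_mul, sub_mulVec, neg_mulVec,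
          mulVec_mulVec]
        abel
    _ = Cᵀ *ᵥ ν + Dᵀ *ᵥ (Λ *ᵥ w) := by rw [hadj2]; simp
end

section
/- Let H ∈ ℝ^{m×m} be symmetric, C ∈ ℝ^{m×n}, A ∈ ℝ^{p×m}, D ∈ ℝ^{p×n}, and let Λ ∈ ℝ^{p×p} be an invertible diagonal matrix such that the block matrix M = [[H, Aᵀ], [Λ A, 0]] is invertible. Let S ∈ ℝ^{m×n}, T ∈ ℝ^{p×n} be the unique solution of the sensitivity system H S + Aᵀ T = −C, Λ A S = −Λ D. Then for any vectors u ∈ ℝⁿ and v ∈ ℝᵐ, the implicit stationarity condition u + Sᵀ v = 0 holds if and only if there exist ν ∈ ℝᵐ and w ∈ ℝᵖ satisfying u + Cᵀ ν + Dᵀ Λ w = 0, v + H ν + Aᵀ Λ w = 0, and A ν = 0. -/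
open Matrix

/-- Linear-algebraic core of the equivalence between KKT points of the implicit
problem and S-stationary points of the MPCC reformulation: with `H` symmetric,
`Λ` an invertible diagonal matrix, the KKT block matrix `M = [[H, Aᵀ], [Λ A, 0]]`
invertible, and `(S, T)` the solution of the sensitivity system
`H S + Aᵀ T = −C`, `Λ A S = −Λ D`, the implicit stationarity condition
`u + Sᵀ v = 0` holds iff there exist adjoint variables `ν, w` with
`u + Cᵀ ν + Dᵀ Λ w = 0`, `v + H ν + Aᵀ Λ w = 0`, and `A ν = 0`. -/
theorem stmt_8 {m n p : ℕ}
    (H : Matrix (Fin m) (Fin m) ℝ) (hH : H.IsSymm)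
    (C : Matrix (Fin m) (Fin n) ℝ)
    (A : Matrix (Fin p) (Fin m) ℝ) (D : Matrix (Fin p) (Fin n) ℝ)
    (Λ : Matrix (Fin p) (Fin p) ℝ) (hΛdiag : Λ.IsDiag) (hΛunit : IsUnit Λ)
    (hM : IsUnit (Matrix.fromBlocks H Aᵀ (Λ * A) (0 : Matrix (Fin p) (Fin p) ℝ)))
    (S : Matrix (Fin m) (Fin n) ℝ) (T : Matrix (Fin p) (Fin n) ℝ)
    (hS : H * S + Aᵀ * T = -C) (hT : Λ * A * S = -(Λ * D))
    (u : Fin n → ℝ) (v : Fin m → ℝ) :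
    u + Sᵀ *ᵥ v = 0 ↔
      ∃ (ν : Fin m → ℝ) (w : Fin p → ℝ),
        u + Cᵀ *ᵥ ν + Dᵀ *ᵥ (Λ *ᵥ w) = 0 ∧
        v + H *ᵥ ν + Aᵀ *ᵥ (Λ *ᵥ w) = 0 ∧
        A *ᵥ ν = 0 := by
  have hΛdet : IsUnit Λ.det := (Matrix.isUnit_iff_isUnit_det Λ).mp hΛunit
  -- From the second sensitivity equation: A * S = -D
  have hAS : A * S = -D := by
    have h2 : Λ⁻¹ * (Λ * A * S) = A * S := by
      rw [← Matrix.mul_assoc Λ⁻¹ (Λ * A) S, ← Matrix.mul_assoc Λ⁻¹ Λ A,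
        Matrix.nonsing_inv_mul Λ hΛdet, Matrix.one_mul]
    have h3 : Λ⁻¹ * (-(Λ * D)) = -D := by
      rw [Matrix.mul_neg, ← Matrix.mul_assoc Λ⁻¹ Λ D, Matrix.nonsing_inv_mul Λ hΛdet,
        Matrix.one_mul]
    rw [← h2, hT, h3]
  have hHS : H * S = -C - Aᵀ * T := eq_sub_of_add_eq hS
  -- Key adjoint identity
  have key : ∀ (ν : Fin m → ℝ) (q : Fin p → ℝ), A *ᵥ ν = 0 →
      Sᵀ *ᵥ (H *ᵥ ν + Aᵀ *ᵥ q) = -(Cᵀ *ᵥ ν + Dᵀ *ᵥ q) := by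
    intro ν q hν
    have hSH : Sᵀ * H = -Cᵀ - Tᵀ * A := by
      have := congrArg Matrix.transpose hHS
      rw [Matrix.transpose_mul, hH.eq, Matrix.transpose_sub, Matrix.transpose_neg,
        Matrix.transpose_mul, Matrix.transpose_transpose] at this
      exact this
    have hSA : Sᵀ * Aᵀ = -Dᵀ := by
      have := congrArg Matrix.transpose hAS
      rw [Matrix.transpose_mul, Matrix.transpose_neg] at this
      exact this
    rw [Matrix.mulVec_add, Matrix.mulVec_mulVec, Matrix.mulVec_mulVec, hSH, hSA,
      Matrix.sub_mulVec, Matrix.neg_mulVec, Matrix.neg_mulVec, ← Matrix.mulVec_mulVec, hν,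
      Matrix.mulVec_zero, sub_zero, neg_add]
  constructor
  · -- forward direction: solve the adjoint system using the transposed block matrix
    intro hst
    set N : Matrix (Fin m ⊕ Fin p) (Fin m ⊕ Fin p) ℝ := Matrix.fromBlocks H (Aᵀ * Λ) A 0 with hN
    have hNM : N = (Matrix.fromBlocks H Aᵀ (Λ * A) (0 : Matrix (Fin p) (Fin p) ℝ))ᵀ := by
      rw [Matrix.fromBlocks_transpose, hH.eq, Matrix.transpose_mul, hΛdiag.isSymm.eq,
        Matrix.transpose_transpose, Matrix.transpose_zero]
    have hNdet : IsUnit N.det := by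
      rw [hNM, Matrix.det_transpose]
      exact ((Matrix.isUnit_iff_isUnit_det _).mp hM)
    set z : Fin m ⊕ Fin p → ℝ := N⁻¹ *ᵥ Sum.elim (-v) 0 with hz
    have hNz : N *ᵥ z = Sum.elim (-v) 0 := by
      rw [hz, Matrix.mulVec_mulVec, Matrix.mul_nonsing_inv N hNdet, Matrix.one_mulVec]
    rw [hN, Matrix.fromBlocks_mulVec] at hNz
    set ν : Fin m → ℝ := z ∘ Sum.inl with hνdef
    set w : Fin p → ℝ := z ∘ Sum.inr with hwdef
    have hl : H *ᵥ ν + (Aᵀ * Λ) *ᵥ w = -v := funext fun i => congrFun hNz (Sum.inl i)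
    have hr : A *ᵥ ν + (0 : Matrix (Fin p) (Fin p) ℝ) *ᵥ w = 0 :=
      funext fun i => congrFun hNz (Sum.inr i)
    rw [Matrix.zero_mulVec, add_zero] at hr
    rw [← Matrix.mulVec_mulVec] at hl
    refine ⟨ν, w, ?_, ?_, hr⟩
    · have hk := key ν (Λ *ᵥ w) hr
      have hu : Sᵀ *ᵥ v = -u := eq_neg_of_add_eq_zero_right hst
      rw [hl, Matrix.mulVec_neg, hu, neg_neg] at hk
      rw [hk, add_assoc, neg_add_cancel]
    · rw [add_assoc, hl, add_neg_cancel]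
  · -- reverse direction
    rintro ⟨ν, w, h1, h2, h3⟩
    have hk := key ν (Λ *ᵥ w) h3
    rw [add_assoc] at h1 h2
    have h2' : H *ᵥ ν + Aᵀ *ᵥ (Λ *ᵥ w) = -v := eq_neg_of_add_eq_zero_right h2
    have h1' : Cᵀ *ᵥ ν + Dᵀ *ᵥ (Λ *ᵥ w) = -u := eq_neg_of_add_eq_zero_right h1
    rw [h2', Matrix.mulVec_neg, h1', neg_neg] at hk
    rw [← hk, neg_add_cancel]
end

section
/- In the ClarkWesterberg1990 problem, the implicit upper-level objective φ(x) = (x − 3)² + (ȳ(x) − 2)² has a local minimizer at x = 3 with φ(3) = 9 and a local minimizer at x = 22/5 with φ(22/5) = 49/5; neither of these is a global minimizer of φ on [0, 8], since φ(1) = 5. -/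
/-- Local optima of the ClarkWesterberg1990 implicit objective
`φ(x) = (x − 3)² + (ȳ(x) − 2)²` with `ȳ(x) = min {5, 2x + 1, (14 − x)/2}`:
`x = 3` is a local minimizer on `[0, 8]` with `φ(3) = 9`, `x = 22/5` is a local
minimizer on `[0, 8]` with `φ(22/5) = 49/5`, and neither is global since
`φ(1) = 5`. -/
theorem stmt_13 (ybar : ℝ → ℝ)
    (hybar : ∀ x, ybar x = min 5 (min (2 * x + 1) ((14 - x) / 2)))
    (φ : ℝ → ℝ) (hφ : ∀ x, φ x = (x - 3) ^ 2 + (ybar x - 2) ^ 2) :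
    IsLocalMinOn φ (Set.Icc (0 : ℝ) 8) 3 ∧ φ 3 = 9 ∧
    IsLocalMinOn φ (Set.Icc (0 : ℝ) 8) (22 / 5) ∧ φ (22 / 5) = 49 / 5 ∧
    φ 1 = 5 ∧
    ¬ (∀ x ∈ Set.Icc (0 : ℝ) 8, φ 3 ≤ φ x) ∧
    ¬ (∀ x ∈ Set.Icc (0 : ℝ) 8, φ (22 / 5) ≤ φ x) := by
  have h3 : φ 3 = 9 := by
    rw [hφ, hybar]
    norm_num
  have h22 : φ (22 / 5) = 49 / 5 := by
    rw [hφ, hybar]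
    rw [show min (2 * (22/5 : ℝ) + 1) ((14 - 22/5) / 2) = (14 - 22/5) / 2 from
      min_eq_right (by norm_num), show min (5:ℝ) ((14 - 22/5) / 2) = (14 - 22/5)/2 from
      min_eq_right (by norm_num)]
    norm_num
  have h1 : φ 1 = 5 := by
    rw [hφ, hybar]
    rw [show min (2 * (1:ℝ) + 1) ((14 - 1) / 2) = 2 * 1 + 1 from min_eq_left (by norm_num),
      show min (5:ℝ) (2 * 1 + 1) = 2 * 1 + 1 from min_eq_right (by norm_num)]
    norm_num
  have lm3 : IsLocalMin φ 3 := by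
    filter_upwards [Ioo_mem_nhds (show (2:ℝ) < 3 by norm_num) (show (3:ℝ) < 4 by norm_num)]
      with x hx
    obtain ⟨ha, hb⟩ := hx
    rw [h3, hφ, hybar,
      show min 5 (min (2 * x + 1) ((14 - x) / 2)) = 5 from
        min_eq_left (le_min (by linarith) (by linarith))]
    nlinarith [sq_nonneg (x - 3)]
  have lm22 : IsLocalMin φ (22 / 5) := by
    filter_upwards [Ioo_mem_nhds (show (4:ℝ) < 22/5 by norm_num)
      (show (22:ℝ)/5 < 5 by norm_num)] with x hx
    obtain ⟨ha, hb⟩ := hx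
    rw [h22, hφ, hybar,
      show min (2 * x + 1) ((14 - x) / 2) = (14 - x) / 2 from min_eq_right (by linarith),
      show min 5 ((14 - x) / 2) = (14 - x) / 2 from min_eq_right (by linarith)]
    nlinarith [sq_nonneg (x - 22/5)]
  refine ⟨lm3.on _, h3, lm22.on _, h22, h1, ?_, ?_⟩
  · intro h
    have := h 1 (by norm_num)
    rw [h3, h1] at this; linarith
  · intro h
    have := h 1 (by norm_num)
    rw [h22, h1] at this; linarith
end
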